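/- Sequential compositionality of fault equivalence: if C₁ is w₁-fault-equivalent to C₁' and C₂ is w₂-fault-equivalent to C₂', then the sequential composite C₂∘C₁ is min(w₁,w₂)-fault-equivalent to C₂'∘C₁', under the assumptions that every fault F on a composite splits as F = F₁·F₂ with F₁, F₂ supported on the respective components, wt(F) = wt(F₁) + wt(F₂), a composite fault is undetectable only if both components are undetectable, and effects compose componentwise. -/
import Mathlib


/-- `w`-fault equivalence of two abstractly modelled noisy circuits. -/
def FaultEquiv {G₁ G₂ S : Type*}
    (wt₁ : G₁ → ℕ) (det₁ : G₁ → Prop) (eff₁ : G₁ → S)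
    (wt₂ : G₂ → ℕ) (det₂ : G₂ → Prop) (eff₂ : G₂ → S)
    (w : ℕ) : Prop :=
  (∀ F₁ : G₁, wt₁ F₁ < w →
    det₁ F₁ ∨ ∃ F₂ : G₂, wt₂ F₂ ≤ wt₁ F₁ ∧ eff₁ F₁ = eff₂ F₂) ∧
  (∀ F₂ : G₂, wt₂ F₂ < w →
    det₂ F₂ ∨ ∃ F₁ : G₁, wt₁ F₁ ≤ wt₂ F₂ ∧ eff₂ F₂ = eff₁ F₁)

/-- Sequential compositionality of fault equivalence: the composite circuit has
fault group the product, with additive weight, disjunctive detectability and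
componentwise effects. -/
theorem faultEquiv_comp {G₁ G₂ G₁' G₂' S₁ S₂ : Type*}
    (wt₁ : G₁ → ℕ) (det₁ : G₁ → Prop) (eff₁ : G₁ → S₁)
    (wt₂ : G₂ → ℕ) (det₂ : G₂ → Prop) (eff₂ : G₂ → S₂)
    (wt₁' : G₁' → ℕ) (det₁' : G₁' → Prop) (eff₁' : G₁' → S₁)
    (wt₂' : G₂' → ℕ) (det₂' : G₂' → Prop) (eff₂' : G₂' → S₂)
    (w₁ w₂ : ℕ)
    (h₁ : FaultEquiv wt₁ det₁ eff₁ wt₁' det₁' eff₁' w₁)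
    (h₂ : FaultEquiv wt₂ det₂ eff₂ wt₂' det₂' eff₂' w₂) :
    FaultEquiv
      (fun F : G₁ × G₂ => wt₁ F.1 + wt₂ F.2)
      (fun F : G₁ × G₂ => det₁ F.1 ∨ det₂ F.2)
      (fun F : G₁ × G₂ => (eff₁ F.1, eff₂ F.2))
      (fun F : G₁' × G₂' => wt₁' F.1 + wt₂' F.2)
      (fun F : G₁' × G₂' => det₁' F.1 ∨ det₂' F.2)
      (fun F : G₁' × G₂' => (eff₁' F.1, eff₂' F.2))
      (min w₁ w₂) := by
  constructor
  · rintro ⟨F₁, F₂⟩ hw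
    rcases h₁.1 F₁ (lt_of_le_of_lt (Nat.le_add_right _ _) (lt_of_lt_of_le hw (min_le_left _ _))) with hd | ⟨G₁, hG₁, he₁⟩
    · exact Or.inl (Or.inl hd)
    rcases h₂.1 F₂ (lt_of_le_of_lt (Nat.le_add_left _ _) (lt_of_lt_of_le hw (min_le_right _ _))) with hd | ⟨G₂, hG₂, he₂⟩
    · exact Or.inl (Or.inr hd)
    exact Or.inr ⟨(G₁, G₂), Nat.add_le_add hG₁ hG₂, by simp [he₁, he₂]⟩
  · rintro ⟨F₁, F₂⟩ hw
    rcases h₁.2 F₁ (lt_of_le_of_lt (Nat.le_add_right _ _) (lt_of_lt_of_le hw (min_le_left _ _))) with hd | ⟨G₁, hG₁, he₁⟩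
    · exact Or.inl (Or.inl hd)
    rcases h₂.2 F₂ (lt_of_le_of_lt (Nat.le_add_left _ _) (lt_of_lt_of_le hw (min_le_right _ _))) with hd | ⟨G₂, hG₂, he₂⟩
    · exact Or.inl (Or.inr hd)
    exact Or.inr ⟨(G₁, G₂), Nat.add_le_add hG₁ hG₂, by simp [he₁, he₂]⟩
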